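/- Let ω, S be real numbers with ω ≠ 0 and let |∇ω|² ≥ 0 be given. If S > |∇ω|²/ω² + ω²/2, then all three eigenvalues λ₁ = S/4 + ω²/8 + √Δ/2, λ₂ = S/4 + ω²/8 - √Δ/2, λ₃ = S/2 - ω²/4 are positive, where Δ = (1/4)(S - (3/2)ω²)² + |∇ω|². -/
import Mathlib

/- STATEMENT 8: pointwise positivity criterion for the eigenvalues of the
Ricci operator: if `ω ≠ 0`, `|∇ω|² ≥ 0` and `S > |∇ω|²/ω² + ω²/2`, then all
three eigenvalues are positive. -/
theorem ricci_eigenvalues_positive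
    (ω S gradω_sq : ℝ) (hω : ω ≠ 0) (hgrad : 0 ≤ gradω_sq)
    (hS : S > gradω_sq / ω ^ 2 + ω ^ 2 / 2)
    (Δ : ℝ) (hΔ : Δ = (1/4) * (S - (3/2) * ω ^ 2) ^ 2 + gradω_sq) :
    0 < S / 4 + ω ^ 2 / 8 + Real.sqrt Δ / 2 ∧
    0 < S / 4 + ω ^ 2 / 8 - Real.sqrt Δ / 2 ∧
    0 < S / 2 - ω ^ 2 / 4 := by
  have hω2 : 0 < ω ^ 2 := by positivity
  have hgω : gradω_sq / ω ^ 2 * ω ^ 2 = gradω_sq := div_mul_cancel₀ _ (ne_of_gt hω2)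
  have hSω : S * ω ^ 2 > gradω_sq + ω ^ 2 / 2 * ω ^ 2 := by nlinarith
  have hpos : 0 < S / 2 + ω ^ 2 / 4 := by nlinarith [div_nonneg hgrad hω2.le]
  have hsq : Real.sqrt Δ < S / 2 + ω ^ 2 / 4 := by
    rw [show S / 2 + ω ^ 2 / 4 = Real.sqrt ((S / 2 + ω ^ 2 / 4) ^ 2) from
      (Real.sqrt_sq hpos.le).symm]
    apply Real.sqrt_lt_sqrt (by nlinarith [sq_nonneg (S - (3/2) * ω ^ 2)])
    nlinarith
  have hsqrt_nonneg : 0 ≤ Real.sqrt Δ := Real.sqrt_nonneg _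
  refine ⟨by linarith, by linarith, by nlinarith [div_nonneg hgrad hω2.le]⟩
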